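/- Let f ∈ L²((0,1]) and let β_{j,k} = ∫ ψ_{j,k}(x) f(x) dx be its Haar wavelet coefficients, where ψ_{j,k} = 2^{j/2}(𝟙_{I_{j+1,2k−1}} − 𝟙_{I_{j+1,2k}}). If f has bounded total variation on (0,1], then for each j ≥ 0, Σ_{k=1}^{2^j} |β_{j,k}| ≤ 2^{−j/2−1} · TV(f; (0,1]). -/

import Mathlib

open MeasureTheory Finset

/-- The Haar wavelet `ψ_{j,k} = 2^{j/2}(𝟙_{I_{j+1,2k−1}} − 𝟙_{I_{j+1,2k}})` on `(0,1]`,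
where `I_{j,k} = ((k−1)2^{−j}, k 2^{−j}]`. -/
noncomputable def haar (j k : ℕ) : ℝ → ℝ := fun x =>
  (2 : ℝ) ^ ((j : ℝ) / 2) *
    (Set.indicator (Set.Ioc ((2 * (k : ℝ) - 2) / 2 ^ (j + 1)) ((2 * (k : ℝ) - 1) / 2 ^ (j + 1)))
        (fun _ => (1 : ℝ)) x
      - Set.indicator (Set.Ioc ((2 * (k : ℝ) - 1) / 2 ^ (j + 1)) ((2 * (k : ℝ)) / 2 ^ (j + 1)))
        (fun _ => (1 : ℝ)) x)

lemma sum_eVar_le (f : ℝ → ℝ) (D : ℝ) (hD : 0 < D) (n : ℕ) :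
    ∑ k ∈ Finset.Icc 1 n,
        eVariationOn f (Set.Ioc ((2 * (k : ℝ) - 2) / D) ((2 * (k : ℝ)) / D))
      ≤ eVariationOn f (Set.Ioc 0 ((2 * (n : ℝ)) / D)) := by
  induction n with
  | zero => simp
  | succ n ih =>
    rw [Finset.sum_Icc_succ_top (by omega)]
    have h1 : (2 * ((n + 1 : ℕ) : ℝ) - 2) / D = 2 * (n : ℝ) / D := by push_cast; ring
    rw [h1]
    have h0 : (0 : ℝ) ≤ 2 * (n : ℝ) / D := by positivity
    have h2 : 2 * (n : ℝ) / D ≤ 2 * ((n + 1 : ℕ) : ℝ) / D := by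
      apply div_le_div_of_nonneg_right (by push_cast; linarith) hD.le
    calc ∑ k ∈ Finset.Icc 1 n,
            eVariationOn f (Set.Ioc ((2 * (k : ℝ) - 2) / D) ((2 * (k : ℝ)) / D))
          + eVariationOn f (Set.Ioc (2 * (n : ℝ) / D) (2 * ((n + 1 : ℕ) : ℝ) / D))
        ≤ eVariationOn f (Set.Ioc 0 (2 * (n : ℝ) / D))
          + eVariationOn f (Set.Ioc (2 * (n : ℝ) / D) (2 * ((n + 1 : ℕ) : ℝ) / D)) := by
          gcongr
      _ ≤ eVariationOn f (Set.Ioc 0 (2 * (n : ℝ) / D)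
            ∪ Set.Ioc (2 * (n : ℝ) / D) (2 * ((n + 1 : ℕ) : ℝ) / D)) := by
          apply eVariationOn.add_le_union
          intro x hx y hy
          exact le_trans hx.2 (le_of_lt hy.1)
      _ = eVariationOn f (Set.Ioc 0 (2 * ((n + 1 : ℕ) : ℝ) / D)) := by
          rw [Set.Ioc_union_Ioc_eq_Ioc h0 h2]

/-- If `f` has bounded total variation on `(0,1]`, then its Haar coefficients satisfy
`Σ_{k=1}^{2^j} |β_{j,k}| ≤ 2^{−j/2−1} · TV(f; (0,1])` for each scale `j`. -/
theorem stmt_15 (f : ℝ → ℝ) (hf : IntegrableOn f (Set.Ioc 0 1))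
    (hBV : BoundedVariationOn f (Set.Ioc 0 1)) (j : ℕ) :
    ∑ k ∈ Finset.Icc 1 (2 ^ j), |∫ x in Set.Ioc (0 : ℝ) 1, haar j k x * f x|
      ≤ (2 : ℝ) ^ (-(j : ℝ) / 2 - 1) * (eVariationOn f (Set.Ioc 0 1)).toReal := by
  have hD : (0 : ℝ) < 2 ^ (j + 1) := by positivity
  set D : ℝ := 2 ^ (j + 1) with hDdef
  have hDle : (2 : ℝ) ^ j * 2 = D := by rw [hDdef]; ring
  -- per-k bound
  have key : ∀ k ∈ Finset.Icc 1 (2 ^ j),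
      |∫ x in Set.Ioc (0 : ℝ) 1, haar j k x * f x|
        ≤ (2 : ℝ) ^ (-(j : ℝ) / 2 - 1) *
          (eVariationOn f (Set.Ioc ((2 * (k : ℝ) - 2) / D) ((2 * (k : ℝ)) / D))).toReal := by
    intro k hk
    obtain ⟨hk1, hk2⟩ := Finset.mem_Icc.mp hk
    set c : ℝ := (2 * (k : ℝ) - 2) / D with hc
    set m : ℝ := (2 * (k : ℝ) - 1) / D with hm
    set b : ℝ := (2 * (k : ℝ)) / D with hb
    have hk1' : (1 : ℝ) ≤ (k : ℝ) := by exact_mod_cast hk1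
    have hk2' : (k : ℝ) ≤ 2 ^ j := by exact_mod_cast hk2
    have hc0 : 0 ≤ c := by
      apply div_nonneg _ hD.le; linarith
    have hb1 : b ≤ 1 := by
      rw [hb, div_le_one hD]; rw [← hDle]; linarith
    have hcm : c < m := by
      rw [hc, hm]; apply div_lt_div_of_pos_right (by linarith) hD
    have hmb : m < b := by
      rw [hm, hb]; apply div_lt_div_of_pos_right (by linarith) hD
    have hsub1 : Set.Ioc c m ⊆ Set.Ioc (0 : ℝ) 1 :=
      Set.Ioc_subset_Ioc hc0 (le_trans hmb.le hb1)
    have hsub2 : Set.Ioc m b ⊆ Set.Ioc (0 : ℝ) 1 :=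
      Set.Ioc_subset_Ioc (le_trans hc0 hcm.le) hb1
    have hsubcb : Set.Ioc c b ⊆ Set.Ioc (0 : ℝ) 1 :=
      Set.Ioc_subset_Ioc hc0 hb1
    -- rewrite the integrand
    have hpt : ∀ x, haar j k x * f x
        = (2 : ℝ) ^ ((j : ℝ) / 2) *
          (Set.indicator (Set.Ioc c m) f x - Set.indicator (Set.Ioc m b) f x) := by
      intro x
      by_cases h1 : x ∈ Set.Ioc c m <;> by_cases h2 : x ∈ Set.Ioc m b <;>
        simp [haar, ← hDdef, ← hc, ← hm, ← hb, Set.indicator_of_mem,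
          Set.indicator_of_notMem, h1, h2] <;> ring
    have hint1 : Integrable (Set.indicator (Set.Ioc c m) f)
        (volume.restrict (Set.Ioc (0 : ℝ) 1)) := hf.indicator measurableSet_Ioc
    have hint2 : Integrable (Set.indicator (Set.Ioc m b) f)
        (volume.restrict (Set.Ioc (0 : ℝ) 1)) := hf.indicator measurableSet_Ioc
    have heq : ∫ x in Set.Ioc (0 : ℝ) 1, haar j k x * f x
        = (2 : ℝ) ^ ((j : ℝ) / 2) *
          ((∫ x in Set.Ioc c m, f x) - ∫ x in Set.Ioc m b, f x) := by
      simp_rw [hpt]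
      rw [integral_const_mul, integral_sub hint1 hint2,
        setIntegral_indicator measurableSet_Ioc, setIntegral_indicator measurableSet_Ioc,
        Set.inter_eq_self_of_subset_right hsub1, Set.inter_eq_self_of_subset_right hsub2]
    -- translation
    set δ : ℝ := 1 / D with hδ
    have hmδ : c + δ = m := by rw [hc, hm, hδ]; field_simp; ring
    have hbδ : m + δ = b := by rw [hm, hb, hδ]; field_simp; ring
    have hI1 : IntervalIntegrable f volume c m :=
      (intervalIntegrable_iff_integrableOn_Ioc_of_le hcm.le).mpr (hf.mono_set hsub1)
    have hI2 : IntervalIntegrable f volume m b :=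
      (intervalIntegrable_iff_integrableOn_Ioc_of_le hmb.le).mpr (hf.mono_set hsub2)
    have hI2' : IntervalIntegrable (fun x => f (x + δ)) volume c m := by
      have := hI2.comp_add_right δ
      rwa [show m - δ = c by linarith [hmδ], show b - δ = m by linarith [hbδ]] at this
    have htrans : ∫ x in Set.Ioc m b, f x = ∫ x in c..m, f (x + δ) := by
      rw [intervalIntegral.integral_comp_add_right f δ, hmδ, hbδ,
        intervalIntegral.integral_of_le hmb.le]
    have heq2 : ∫ x in Set.Ioc (0 : ℝ) 1, haar j k x * f x
        = (2 : ℝ) ^ ((j : ℝ) / 2) * ∫ x in c..m, (f x - f (x + δ)) := by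
      rw [heq, htrans, ← intervalIntegral.integral_of_le hcm.le,
        intervalIntegral.integral_sub hI1 hI2']
    -- pointwise bound
    have hfin : eVariationOn f (Set.Ioc c b) ≠ ⊤ :=
      fun h => hBV (top_le_iff.mp (h ▸ eVariationOn.mono f hsubcb))
    have hbd : ∀ x ∈ Set.uIoc c m, ‖f x - f (x + δ)‖
        ≤ (eVariationOn f (Set.Ioc c b)).toReal := by
      intro x hx
      rw [Set.uIoc_of_le hcm.le] at hx
      have hx1 : x ∈ Set.Ioc c b := ⟨hx.1, le_trans hx.2 hmb.le⟩
      have hx2 : x + δ ∈ Set.Ioc c b := by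
        constructor
        · have : 0 < δ := by rw [hδ]; positivity
          linarith [hx.1]
        · linarith [hx.2, hbδ]
      have := eVariationOn.edist_le f hx1 hx2
      have h' := ENNReal.toReal_mono hfin this
      rwa [← dist_edist, Real.dist_eq] at h'
    have hnorm := intervalIntegral.norm_integral_le_of_norm_le_const hbd
    rw [Real.norm_eq_abs] at hnorm
    have hmc : |m - c| = δ := by
      rw [abs_of_pos (by linarith), ← hmδ]; ring
    rw [heq2, abs_mul, abs_of_pos (by positivity : (0:ℝ) < (2:ℝ) ^ ((j : ℝ) / 2))]
    rw [hmc] at hnorm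
    have hconst : (2 : ℝ) ^ ((j : ℝ) / 2) * δ = (2 : ℝ) ^ (-(j : ℝ) / 2 - 1) := by
      rw [hδ, hDdef]
      have : ((2 : ℝ) ^ (j + 1) : ℝ) = (2 : ℝ) ^ ((j : ℝ) + 1) := by
        rw [← Real.rpow_natCast 2 (j + 1)]; push_cast; ring_nf
      rw [this, one_div, ← Real.rpow_neg (by norm_num : (0:ℝ) ≤ 2),
        ← Real.rpow_add (by norm_num : (0:ℝ) < 2)]
      congr 1; ring
    calc (2 : ℝ) ^ ((j : ℝ) / 2) * |∫ x in c..m, (f x - f (x + δ))|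
        ≤ (2 : ℝ) ^ ((j : ℝ) / 2) *
          ((eVariationOn f (Set.Ioc c b)).toReal * δ) := by
          gcongr
      _ = (2 : ℝ) ^ (-(j : ℝ) / 2 - 1) * (eVariationOn f (Set.Ioc c b)).toReal := by
          rw [← hconst]; ring
  -- sum up
  calc ∑ k ∈ Finset.Icc 1 (2 ^ j), |∫ x in Set.Ioc (0 : ℝ) 1, haar j k x * f x|
      ≤ ∑ k ∈ Finset.Icc (1:ℕ) (2 ^ j), (2 : ℝ) ^ (-(j : ℝ) / 2 - 1) *
          (eVariationOn f (Set.Ioc ((2 * (k : ℝ) - 2) / D) ((2 * (k : ℝ)) / D))).toReal :=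
        Finset.sum_le_sum key
    _ = (2 : ℝ) ^ (-(j : ℝ) / 2 - 1) * ∑ k ∈ Finset.Icc (1:ℕ) (2 ^ j),
          (eVariationOn f (Set.Ioc ((2 * (k : ℝ) - 2) / D) ((2 * (k : ℝ)) / D))).toReal := by
        rw [Finset.mul_sum]
    _ ≤ (2 : ℝ) ^ (-(j : ℝ) / 2 - 1) * (eVariationOn f (Set.Ioc 0 1)).toReal := by
        apply mul_le_mul_of_nonneg_left ?_ (by positivity)
        have hfin : ∀ k ∈ Finset.Icc (1:ℕ) (2 ^ j),
            eVariationOn f (Set.Ioc ((2 * (k : ℝ) - 2) / D) ((2 * (k : ℝ)) / D)) ≠ ⊤ := by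
          intro k hk
          obtain ⟨hk1, hk2⟩ := Finset.mem_Icc.mp hk
          have hk1' : (1 : ℝ) ≤ (k : ℝ) := by exact_mod_cast hk1
          have hk2' : (k : ℝ) ≤ 2 ^ j := by exact_mod_cast hk2
          have hsub : Set.Ioc ((2 * (k : ℝ) - 2) / D) ((2 * (k : ℝ)) / D)
              ⊆ Set.Ioc (0 : ℝ) 1 := by
            apply Set.Ioc_subset_Ioc
            · apply div_nonneg _ hD.le; linarith
            · rw [div_le_one hD]; rw [← hDle]; linarith
          exact fun h => hBV (top_le_iff.mp (h ▸ eVariationOn.mono f hsub))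
        rw [← ENNReal.toReal_sum hfin]
        apply ENNReal.toReal_mono hBV
        have := sum_eVar_le f D hD (2 ^ j)
        have h1 : (2 * ((2 ^ j : ℕ) : ℝ)) / D = 1 := by
          rw [div_eq_one_iff_eq hD.ne', ← hDle]; push_cast; ring
        rwa [h1] at this
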